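/- arXiv:2004.03078 — 2 statements merged into one kernel-verified Lean document; each statement's English description precedes it below -/
import Mathlib

section
/- (Resource generation bound.) Let n ≥ 1, let τ > 0, let ρ : [0,τ] → Mₙ(ℂ) be a continuously differentiable family of positive definite density matrices with derivative ρ̇ₜ, let σ be a positive definite density matrix, and suppose ρ₀ = σ. Set ΔS := S(ρ_τ) − S(ρ₀). Then |S(ρ_τ‖σ) + ΔS| ≤ ∫₀^τ |Tr[ρ̇ₜ · log σ]| dt; equivalently τ ≥ T_g(σ,ρ_τ) := |S(ρ_τ‖σ) + ΔS| / ⟨|Tr[ρ̇ₜ log σ]|⟩ₜ, where ⟨f⟩ₜ := (1/τ)∫₀^τ f(t) dt. -/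
/-!
With `σ = ρ₀`, the entropy terms `Tr[ρ_τ log ρ_τ]` cancel in `S(ρ_τ‖σ) + ΔS`, leaving the linear
quantity `-Tr[(ρ_τ - ρ₀) log σ]`. By the fundamental theorem of calculus this is
`-∫₀^τ Tr[ρ̇ₜ log σ] dt`, whose absolute value is at most `∫₀^τ |Tr[ρ̇ₜ log σ]| dt`.
-/

open Matrix MeasureTheory intervalIntegral Filter
open scoped ComplexOrder

attribute [local instance] Matrix.normedAddCommGroup Matrix.normedSpace

/-- Functional-calculus logarithm of a Hermitian matrix (junk value `0` otherwise):
for `A = U diag(eigenvalues) U†` it is `U diag(log eigenvalues) U†`. -/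
noncomputable def matLog {n : ℕ} (A : Matrix (Fin n) (Fin n) ℂ) :
    Matrix (Fin n) (Fin n) ℂ :=
  if hA : A.IsHermitian then
    (hA.eigenvectorUnitary : Matrix (Fin n) (Fin n) ℂ) *
      Matrix.diagonal (fun i => (Real.log (hA.eigenvalues i) : ℂ)) *
      (hA.eigenvectorUnitary : Matrix (Fin n) (Fin n) ℂ)ᴴ
  else 0

/-- Quantum relative entropy `S(ρ‖σ) = Tr[ρ (log ρ - log σ)]`. -/
noncomputable def relEnt {n : ℕ} (ρ σ : Matrix (Fin n) (Fin n) ℂ) : ℝ :=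
  ((ρ * (matLog ρ - matLog σ)).trace).re

/-- Von Neumann entropy `S(ρ) = -Tr[ρ log ρ]`. -/
noncomputable def vnEnt {n : ℕ} (ρ : Matrix (Fin n) (Fin n) ℂ) : ℝ :=
  -((ρ * matLog ρ).trace).re

/-- A positive definite density matrix: positive definite with unit trace. -/
def IsPDDensity {n : ℕ} (ρ : Matrix (Fin n) (Fin n) ℂ) : Prop :=
  ρ.PosDef ∧ ρ.trace = 1

theorem relEnt_add_vnEnt_sub_vnEnt {n : ℕ} (ρ σ : Matrix (Fin n) (Fin n) ℂ) :
    relEnt ρ σ + (vnEnt ρ - vnEnt σ) = -(((ρ - σ) * matLog σ).trace).re := by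
  simp only [relEnt, vnEnt, mul_sub, sub_mul, trace_sub, Complex.sub_re]
  ring

section ReTraceMulRight

variable {m : Type*} [Fintype m]

noncomputable def reTraceMulRight (L : Matrix m m ℂ) : Matrix m m ℂ →L[ℝ] ℝ :=
  LinearMap.toContinuousLinearMap
    (Complex.reLm ∘ₗ traceLinearMap m ℝ ℂ ∘ₗ LinearMap.mulRight ℝ L)

theorem integral_re_trace_mul_eq_sub {a b : ℝ} (hab : a ≤ b) {f f' : ℝ → Matrix m m ℂ}
    (L : Matrix m m ℂ) (hderiv : ∀ t ∈ Set.Icc a b, HasDerivAt f (f' t) t)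
    (hcont : ContinuousOn f' (Set.Icc a b)) :
    ∫ t in a..b, ((f' t * L).trace).re = ((f b * L).trace).re - ((f a * L).trace).re := by
  rw [← Set.uIcc_of_le hab] at hderiv hcont
  refine integral_eq_sub_of_hasDerivAt (f := fun t => reTraceMulRight L (f t))
    (fun t ht => ?_) ?_
  · exact (reTraceMulRight L).hasFDerivAt.comp_hasDerivAt t (hderiv t ht)
  · exact ((reTraceMulRight L).continuous.comp_continuousOn hcont).intervalIntegrable

end ReTraceMulRight

theorem div_one_div_mul_le_of_le {x I τ : ℝ} (hτ : 0 < τ) (hx : 0 ≤ x) (hxI : x ≤ I) :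
    x / ((1 / τ) * I) ≤ τ := by
  rw [one_div, div_mul_eq_div_div, div_inv_eq_mul, mul_div_right_comm]
  exact mul_le_of_le_one_left hτ.le (div_le_one_of_le₀ hxI (hx.trans hxI))

theorem resource_generation_bound_general
    {n : ℕ} {τ : ℝ} (hτ : 0 < τ)
    (ρ ρ' : ℝ → Matrix (Fin n) (Fin n) ℂ)
    (hderiv : ∀ t ∈ Set.Icc (0 : ℝ) τ, HasDerivAt ρ (ρ' t) t)
    (hcont : ContinuousOn ρ' (Set.Icc (0 : ℝ) τ))
    (σ : Matrix (Fin n) (Fin n) ℂ) (hρ0 : ρ 0 = σ)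
    (ΔS : ℝ) (hΔS : ΔS = vnEnt (ρ τ) - vnEnt (ρ 0)) :
    |relEnt (ρ τ) σ + ΔS| ≤ (∫ t in (0 : ℝ)..τ, |((ρ' t * matLog σ).trace).re|) ∧
    τ ≥ |relEnt (ρ τ) σ + ΔS| /
        ((1 / τ) * ∫ t in (0 : ℝ)..τ, |((ρ' t * matLog σ).trace).re|) := by
  have hkey : relEnt (ρ τ) σ + ΔS = -∫ t in (0 : ℝ)..τ, ((ρ' t * matLog σ).trace).re := by
    rw [integral_re_trace_mul_eq_sub hτ.le (matLog σ) hderiv hcont, hΔS, hρ0,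
      relEnt_add_vnEnt_sub_vnEnt, sub_mul, trace_sub, Complex.sub_re]
  have hbound : |relEnt (ρ τ) σ + ΔS| ≤ ∫ t in (0 : ℝ)..τ, |((ρ' t * matLog σ).trace).re| := by
    rw [hkey, abs_neg]
    exact abs_integral_le_integral_abs hτ.le
  exact ⟨hbound, div_one_div_mul_le_of_le hτ (abs_nonneg _) hbound⟩

/-- **Corollary 2 of the paper (resource generation bound).** For a C¹ family `ρₜ`
of positive definite density matrices starting from the free state `σ = ρ₀`:
`|S(ρ_τ‖σ) + ΔS| ≤ ∫₀^τ |Tr[ρ̇ₜ log σ]| dt`, i.e. `τ ≥ T_g(σ, ρ_τ)`. -/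
theorem resource_generation_bound
    {n : ℕ} (hn : 1 ≤ n) {τ : ℝ} (hτ : 0 < τ)
    (ρ ρ' : ℝ → Matrix (Fin n) (Fin n) ℂ)
    (hρ : ∀ t ∈ Set.Icc (0 : ℝ) τ, IsPDDensity (ρ t))
    (hderiv : ∀ t ∈ Set.Icc (0 : ℝ) τ, HasDerivAt ρ (ρ' t) t)
    (hcont : ContinuousOn ρ' (Set.Icc (0 : ℝ) τ))
    (σ : Matrix (Fin n) (Fin n) ℂ) (hσ : IsPDDensity σ) (hρ0 : ρ 0 = σ)
    (ΔS : ℝ) (hΔS : ΔS = vnEnt (ρ τ) - vnEnt (ρ 0)) :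
    |relEnt (ρ τ) σ + ΔS| ≤ (∫ t in (0 : ℝ)..τ, |((ρ' t * matLog σ).trace).re|) ∧
    τ ≥ |relEnt (ρ τ) σ + ΔS| /
        ((1 / τ) * ∫ t in (0 : ℝ)..τ, |((ρ' t * matLog σ).trace).re|) :=
  resource_generation_bound_general hτ ρ ρ' hderiv hcont σ hρ0 ΔS hΔS
end

section
/- (Saturation of the resource speed limit under dephasing.) Fix p ∈ (0,1), γ > 0, τ > 0. Let ρₜ be the 4×4 matrix with diagonal entries (a, p/4, p/4, a) where a := p/4 + (1−p)/2, with (1,4) and (4,1) entries equal to e^{−γt}(1−p)/2, and all other entries 0; let σ_W be the diagonal matrix diag(a, p/4, p/4, a). Then (i) Tr[ρ̇ₜ · log σ_W] = 0 for all t ∈ [0,τ], and (ii) |S(ρ_τ‖σ_W) − S(ρ₀‖σ_W)| = ∫₀^τ |−Tr[ρ̇ₜ · log σ_W] − (d/dt)S(ρₜ)| dt; that is, the resource speed limit T_M(ρ₀,ρ_τ) of Theorem 1, evaluated with σ_W as the closest free state, equals the evolution time τ. -/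
open Matrix MeasureTheory intervalIntegral Filter
open scoped ComplexOrder

attribute [local instance] Matrix.normedAddCommGroup Matrix.normedSpace

/-! In the Bell basis `ρₜ` is diagonal with spectrum `(a + cₜ, p/4, p/4, a − cₜ)`, while `σ_W` is
diagonal in the computational basis, so `log σ_W` is diagonal too. Since the diagonal of `ρₜ` does
not depend on `t`, `Tr[ρₜ log σ_W]` is constant: this gives (i), and `M(ρₜ) = −S(ρₜ) + const`.
The entropy `S(ρₜ)` has derivative `ċₜ (log (a − cₜ) − log (a + cₜ)) ≥ 0` because the coherence `cₜ`
decays, so `∫₀^τ |Ṡ| = S(ρ_τ) − S(ρ₀) = |M(ρ_τ) − M(ρ₀)|`. -/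

open Polynomial

section MatrixLogarithm

variable {n : ℕ} {U : Matrix (Fin n) (Fin n) ℂ}

lemma aeval_diagonal {R A m : Type*} [CommSemiring R] [CommSemiring A] [Algebra R A]
    [Fintype m] [DecidableEq m] (q : R[X]) (v : m → A) :
    aeval (diagonal v) q = diagonal (fun i => aeval (v i) q) := by
  rw [← diagonalAlgHom_apply R, aeval_algHom_apply, aeval_pi_apply]
  rfl

lemma isSelfAdjoint_conj_diagonal (U : Matrix (Fin n) (Fin n) ℂ) (d : Fin n → ℝ) :
    IsSelfAdjoint (U * diagonal (fun i => (d i : ℂ)) * star U) := by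
  refine IsSelfAdjoint.conjugate ?_ U
  rw [IsSelfAdjoint, star_eq_conjTranspose, diagonal_conjTranspose]
  congr 1
  ext i
  simp

lemma spectrum_unitary_conj_diagonal (hU : U ∈ unitary (Matrix (Fin n) (Fin n) ℂ))
    (d : Fin n → ℝ) :
    spectrum ℝ (U * diagonal (fun i => (d i : ℂ)) * star U) = Set.range d := by
  ext x
  rw [Unitary.spectrum_star_right_conjugate (U := ⟨U, hU⟩), ← spectrum.algebraMap_mem_iff ℂ,
    spectrum_diagonal]
  simp

/-- On the finite spectrum `f` agrees with a Lagrange interpolation polynomial, and polynomials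
commute with unitary conjugation and with `diagonal`. -/
lemma cfc_unitary_conj_diagonal (f : ℝ → ℝ) (hU : U ∈ unitary (Matrix (Fin n) (Fin n) ℂ))
    (d : Fin n → ℝ) :
    cfc f (U * diagonal (fun i => (d i : ℂ)) * star U) =
      U * diagonal (fun i => (f (d i) : ℂ)) * star U := by
  classical
  set q := Lagrange.interpolate (Finset.univ.image d) id (f ·)
  have hq (i : Fin n) : q.eval (d i) = f (d i) :=
    Lagrange.eval_interpolate_at_node _ (Set.injOn_id _)
      (Finset.mem_image_of_mem d (Finset.mem_univ i))
  rw [← cfc_congr (f := q.eval), cfc_polynomial q _ (isSelfAdjoint_conj_diagonal U d)]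
  · change aeval (Unitary.conjStarAlgAut ℝ _ ⟨U, hU⟩ _) q = Unitary.conjStarAlgAut ℝ _ ⟨U, hU⟩ _
    rw [aeval_algHom_apply, aeval_diagonal]
    simp only [← Complex.coe_algebraMap, aeval_algebraMap_apply_eq_algebraMap_eval, hq]
  · rw [spectrum_unitary_conj_diagonal hU]
    rintro - ⟨i, rfl⟩
    exact hq i

lemma matLog_eq_cfc {A : Matrix (Fin n) (Fin n) ℂ} (hA : A.IsHermitian) :
    matLog A = cfc Real.log A := by
  rw [matLog, dif_pos hA, hA.cfc_eq, IsHermitian.cfc, Unitary.conjStarAlgAut_apply]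
  rfl

lemma matLog_unitary_conj_diagonal (hU : U ∈ unitary (Matrix (Fin n) (Fin n) ℂ))
    (d : Fin n → ℝ) :
    matLog (U * diagonal (fun i => (d i : ℂ)) * star U) =
      U * diagonal (fun i => (Real.log (d i) : ℂ)) * star U := by
  rw [matLog_eq_cfc (isSelfAdjoint_conj_diagonal U d), cfc_unitary_conj_diagonal _ hU]

lemma matLog_diagonal (d : Fin n → ℝ) :
    matLog (diagonal (fun i => (d i : ℂ))) = diagonal (fun i => (Real.log (d i) : ℂ)) := by
  simpa using matLog_unitary_conj_diagonal (one_mem _) d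

lemma vnEnt_unitary_conj_diagonal (hU : U ∈ unitary (Matrix (Fin n) (Fin n) ℂ))
    (d : Fin n → ℝ) :
    vnEnt (U * diagonal (fun i => (d i : ℂ)) * star U) = -∑ i, d i * Real.log (d i) := by
  have hUU : star U * U = 1 := Unitary.star_mul_self_of_mem hU
  have hconj : U * diagonal (fun i => (d i : ℂ)) * star U *
      (U * diagonal (fun i => (Real.log (d i) : ℂ)) * star U) =
      U * diagonal (fun i => ((d i * Real.log (d i) : ℝ) : ℂ)) * star U := by
    simp only [Matrix.mul_assoc, ← Matrix.mul_assoc (star U), hUU, Matrix.one_mul]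
    rw [← Matrix.mul_assoc (diagonal _), diagonal_mul_diagonal]
    simp only [Complex.ofReal_mul]
  rw [vnEnt, matLog_unitary_conj_diagonal hU, hconj, trace_mul_cycle, hUU, Matrix.one_mul,
    trace_diagonal, ← Complex.ofReal_sum, Complex.ofReal_re]

lemma relEnt_eq_neg_vnEnt_sub (ρ σ : Matrix (Fin n) (Fin n) ℂ) :
    relEnt ρ σ = -vnEnt ρ - (ρ * matLog σ).trace.re := by
  rw [relEnt, vnEnt, Matrix.mul_sub, trace_sub, Complex.sub_re, neg_neg]

end MatrixLogarithm

lemma intervalIntegral.integral_abs_deriv_eq_sub_of_nonneg {f f' : ℝ → ℝ} {a b : ℝ}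
    (hab : a ≤ b) (hf : ∀ t ∈ Set.Icc a b, HasDerivAt f (f' t) t)
    (hf' : ∀ t ∈ Set.Icc a b, 0 ≤ f' t) :
    ∫ t in a..b, |deriv f t| = f b - f a := by
  rw [← Set.uIcc_of_le hab] at hf hf'
  have hint : IntervalIntegrable f' volume a b :=
    intervalIntegrable_deriv_of_nonneg (HasDerivAt.continuousOn hf)
      (fun t ht => hf t (Set.Ioo_subset_Icc_self ht))
      (fun t ht => hf' t (Set.Ioo_subset_Icc_self ht))
  rw [← integral_eq_sub_of_hasDerivAt hf hint]
  refine integral_congr fun t ht => ?_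
  rw [(hf t ht).deriv, abs_of_nonneg (hf' t ht)]

section XState

/-- Its columns are `|φ⁺⟩, |01⟩, |10⟩, |φ⁻⟩`. -/
noncomputable def bellMatrix : Matrix (Fin 4) (Fin 4) ℂ :=
  !![(√2 : ℂ)⁻¹, 0, 0, (√2 : ℂ)⁻¹; 0, 1, 0, 0; 0, 0, 1, 0; (√2 : ℂ)⁻¹, 0, 0, -(√2 : ℂ)⁻¹]

lemma inv_sqrt_two_sq : (√2 : ℂ)⁻¹ ^ 2 = 1 / 2 := by
  rw [inv_pow, ← Complex.ofReal_pow, Real.sq_sqrt zero_le_two]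
  norm_num

lemma star_bellMatrix : star bellMatrix = bellMatrix := by
  ext i j
  fin_cases i <;> fin_cases j <;> simp [bellMatrix, ← Complex.ofReal_inv]

lemma bellMatrix_mem_unitary : bellMatrix ∈ unitary (Matrix (Fin 4) (Fin 4) ℂ) := by
  rw [← Matrix.unitaryGroup, Matrix.mem_unitaryGroup_iff, star_bellMatrix]
  ext i j
  fin_cases i <;> fin_cases j <;>
    simp [bellMatrix, Matrix.mul_apply, Fin.sum_univ_four] <;> ring_nf <;>
    simp only [inv_sqrt_two_sq] <;> norm_num

def xState (a q c : ℝ) : Matrix (Fin 4) (Fin 4) ℂ :=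
  !![(a : ℂ), 0, 0, (c : ℂ); 0, (q : ℂ), 0, 0; 0, 0, (q : ℂ), 0; (c : ℂ), 0, 0, (a : ℂ)]

variable {a q : ℝ}

lemma xState_eq_bellMatrix_conj (a q c : ℝ) :
    xState a q c =
      bellMatrix * diagonal (fun i => ((![a + c, q, q, a - c] i : ℝ) : ℂ)) * star bellMatrix := by
  rw [star_bellMatrix]
  ext i j
  simp only [Matrix.mul_apply, Fin.sum_univ_four]
  fin_cases i <;> fin_cases j <;> simp [xState, bellMatrix] <;> ring_nf <;>
    simp only [inv_sqrt_two_sq] <;> ring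

lemma xState_eq_add_smul (a q c : ℝ) : xState a q c = xState a q 0 + (c : ℂ) • xState 0 0 1 := by
  rw [xState, xState, xState, Matrix.smul_of, Matrix.of_add_of]
  congr 1
  simp

lemma trace_xState_mul_diagonal (a q c : ℝ) (v : Fin 4 → ℂ) :
    (xState a q c * diagonal v).trace = a * v 0 + q * v 1 + q * v 2 + a * v 3 := by
  simp only [trace, diag, mul_diagonal, Fin.sum_univ_four, xState]
  simp

lemma deriv_xState {c : ℝ → ℝ} {c' t : ℝ} (hc : HasDerivAt c c' t) :
    deriv (fun s => xState a q (c s)) t = (c' : ℂ) • xState 0 0 1 := by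
  have h : (fun s => xState a q (c s)) = fun s => xState a q 0 + (c s : ℂ) • xState 0 0 1 :=
    funext fun s => xState_eq_add_smul a q (c s)
  rw [h]
  exact ((hc.ofReal_comp.smul_const _).const_add _).deriv

lemma vnEnt_xState (a q c : ℝ) :
    vnEnt (xState a q c) =
      -((a + c) * Real.log (a + c) + 2 * (q * Real.log q) + (a - c) * Real.log (a - c)) := by
  rw [xState_eq_bellMatrix_conj, vnEnt_unitary_conj_diagonal bellMatrix_mem_unitary,
    Fin.sum_univ_four]
  simp
  ring

lemma hasDerivAt_vnEnt_xState {c : ℝ → ℝ} {c' t : ℝ} (hc : HasDerivAt c c' t)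
    (h_add : a + c t ≠ 0) (h_sub : a - c t ≠ 0) :
    HasDerivAt (fun s => vnEnt (xState a q (c s)))
      (c' * (Real.log (a - c t) - Real.log (a + c t))) t := by
  simp only [vnEnt_xState]
  have h₁ := (Real.hasDerivAt_mul_log h_add).comp t (hc.const_add a)
  have h₂ := (Real.hasDerivAt_mul_log h_sub).comp t (hc.const_sub a)
  exact ((h₁.add_const (2 * (q * Real.log q))).add h₂).neg.congr_deriv (by ring)

lemma xState_entropy_rate_nonneg {c c' : ℝ} (hc' : c' ≤ 0) (hc₀ : 0 ≤ c) (hca : c < a) :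
    0 ≤ c' * (Real.log (a - c) - Real.log (a + c)) :=
  mul_nonneg_of_nonpos_of_nonpos hc' (sub_nonpos.mpr (Real.log_le_log (by linarith) (by linarith)))

lemma relEnt_xState_sub_relEnt_xState (a q c c' : ℝ) (d : Fin 4 → ℝ) :
    relEnt (xState a q c) (diagonal (fun i => (d i : ℂ))) -
        relEnt (xState a q c') (diagonal (fun i => (d i : ℂ))) =
      -(vnEnt (xState a q c) - vnEnt (xState a q c')) := by
  simp only [relEnt_eq_neg_vnEnt_sub, matLog_diagonal, trace_xState_mul_diagonal]
  ring

end XState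

/-- **Saturation of the resource speed limit under pure dephasing.** Let `ρₜ` be the
two-qubit Werner state `ρ_W(p)` dephased with factor `e^{-γt}` (in the computational
basis), and `σ_W` its dephasing (the closest separable/classical/incoherent state).
Then (i) `Tr[ρ̇ₜ log σ_W] = 0` for all `t ∈ [0,τ]`, and (ii)
`|S(ρ_τ‖σ_W) - S(ρ₀‖σ_W)| = ∫₀^τ |-Tr[ρ̇ₜ log σ_W] - Ṡ(ρₜ)| dt`; that is, the
resource speed limit `T_M(ρ₀,ρ_τ)` of Theorem 1 equals the evolution time `τ`. -/
theorem dephasing_saturates_resource_speed_limit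
    (p γ τ : ℝ) (hp : p ∈ Set.Ioo (0 : ℝ) 1) (hγ : 0 < γ) (hτ : 0 < τ)
    (a : ℝ) (ha : a = p / 4 + (1 - p) / 2)
    (c : ℝ → ℝ) (hc : c = fun t => Real.exp (-γ * t) * (1 - p) / 2)
    (ρ : ℝ → Matrix (Fin 4) (Fin 4) ℂ)
    (hρ : ρ = fun t =>
      !![(a : ℂ), 0, 0, (c t : ℂ);
         0, ((p : ℂ) / 4), 0, 0;
         0, 0, ((p : ℂ) / 4), 0;
         (c t : ℂ), 0, 0, (a : ℂ)])
    (σW : Matrix (Fin 4) (Fin 4) ℂ)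
    (hσW : σW = Matrix.diagonal ![(a : ℂ), (p : ℂ) / 4, (p : ℂ) / 4, (a : ℂ)]) :
    (∀ t ∈ Set.Icc (0 : ℝ) τ, (deriv ρ t * matLog σW).trace = 0) ∧
    |relEnt (ρ τ) σW - relEnt (ρ 0) σW| =
      ∫ t in (0 : ℝ)..τ,
        |(-((deriv ρ t * matLog σW).trace).re) - deriv (fun s => vnEnt (ρ s)) t| := by
  obtain ⟨hp₀, hp₁⟩ := hp
  have hρ' : ρ = fun t => xState a (p / 4) (c t) := by
    rw [hρ]; funext t; simp only [xState, Complex.ofReal_div, Complex.ofReal_ofNat]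
  have hσ' : σW = diagonal (fun i => ((![a, p / 4, p / 4, a] i : ℝ) : ℂ)) := by
    rw [hσW]; congr 1; ext i; fin_cases i <;> simp
  have hc' (t : ℝ) : HasDerivAt c (-γ * c t) t := by
    rw [hc]
    exact ((((hasDerivAt_id t).const_mul (-γ)).exp.mul_const (1 - p)).div_const 2).congr_deriv
      (by simp only [id]; ring)
  have hc_mem (t : ℝ) (ht : t ∈ Set.Icc 0 τ) : 0 ≤ c t ∧ c t < a := by
    have : Real.exp (-γ * t) ≤ 1 := Real.exp_le_one_iff.mpr (by nlinarith [ht.1])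
    rw [hc, ha]; constructor <;> nlinarith [Real.exp_pos (-γ * t)]
  have htrace (t : ℝ) : (deriv ρ t * matLog σW).trace = 0 := by
    rw [hρ', deriv_xState (hc' t), hσ', matLog_diagonal, smul_mul, trace_smul,
      trace_xState_mul_diagonal]
    simp
  have hS (t : ℝ) (ht : t ∈ Set.Icc 0 τ) : HasDerivAt (fun s => vnEnt (ρ s))
      (-γ * c t * (Real.log (a - c t) - Real.log (a + c t))) t := by
    rw [hρ']
    exact hasDerivAt_vnEnt_xState (hc' t) (by linarith [hc_mem t ht]) (by linarith [hc_mem t ht])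
  have hS_nonneg (t : ℝ) (ht : t ∈ Set.Icc 0 τ) :
      0 ≤ -γ * c t * (Real.log (a - c t) - Real.log (a + c t)) := by
    obtain ⟨hc₀, hca⟩ := hc_mem t ht
    exact xState_entropy_rate_nonneg (by nlinarith) hc₀ hca
  have hmain := intervalIntegral.integral_abs_deriv_eq_sub_of_nonneg hτ.le hS hS_nonneg
  refine ⟨fun t _ => htrace t, ?_⟩
  simp only [htrace, Complex.zero_re, neg_zero, zero_sub, abs_neg]
  have hrel : relEnt (ρ τ) σW - relEnt (ρ 0) σW = -(vnEnt (ρ τ) - vnEnt (ρ 0)) := by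
    rw [hρ', hσ']
    exact relEnt_xState_sub_relEnt_xState _ _ _ _ _
  rw [hmain, hrel, abs_neg, abs_of_nonneg]
  rw [← hmain]
  exact intervalIntegral.integral_nonneg hτ.le fun t _ => abs_nonneg _
end
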